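/- Let H be a complex Hilbert space and let T = a·I + K, where a ∈ ℂ with a ≠ 0, K : H → H is a compact linear operator, and T is invertible (has a bounded inverse). Let (V_j)_{j ∈ ℕ} be a sequence of finite-dimensional subspaces of H with orthogonal projections P_j : H → H onto V_j such that P_j x → x in H for every x ∈ H as j → ∞. Then for all sufficiently large j, the Galerkin truncation T̃_j := (P_j ∘ T)|_{V_j} : V_j → V_j is invertible, and ‖T̃_j⁻¹‖ → ‖T⁻¹‖ as j → ∞, where operator norms are taken with respect to the H-norm. -/

import Mathlib

/-! Put `P j := projCLM (V j)` and `A j := a • 1 + P j * K`. Since `K` is compact and the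
contractions `P j` tend to the identity strongly, `P j * K → K` in norm, so `A j → T`; hence for
large `j` the operator `A j` is invertible and `(A j)⁻¹ → T⁻¹`. Now `A j` maps the
finite-dimensional space `V j` injectively into itself, hence onto itself, so `(A j)⁻¹` leaves
`V j` invariant too; since `P j * A j = P j * T`, the truncation of `(A j)⁻¹` inverts the
truncation of `T`. Its norm lies between `‖(A j)⁻¹ * P j‖` and `‖(A j)⁻¹‖`: the upper bound tends
to `‖T⁻¹‖`, and the lower one has `liminf ≥ ‖T⁻¹‖` because `(A j)⁻¹ * P j → T⁻¹` strongly. -/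

open Filter

/-- The orthogonal projection onto a finite-dimensional subspace `V`, viewed as a bounded
operator `H → H`. -/
noncomputable def projCLM {H : Type*} [NormedAddCommGroup H] [InnerProductSpace ℂ H]
    (V : Submodule ℂ H) [FiniteDimensional ℂ V] : H →L[ℂ] H :=
  V.subtypeL.comp (V.orthogonalProjection)

/-- The Galerkin truncation `T̃ := (P ∘ T)|_V : V → V` of an operator `T : H → H` to a
finite-dimensional subspace `V`, where `P` is the orthogonal projection onto `V`. -/
noncomputable def galerkinTruncSub {H : Type*} [NormedAddCommGroup H] [InnerProductSpace ℂ H]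
    (T : H →L[ℂ] H) (V : Submodule ℂ H) [FiniteDimensional ℂ V] : V →L[ℂ] V :=
  (V.orthogonalProjection).comp (T.comp V.subtypeL)

theorem Equicontinuous.tendstoUniformlyOn_of_tendsto {ι X α : Type*} [TopologicalSpace X]
    [UniformSpace α] {F : ι → X → α} {f : X → α} {l : Filter ι} (hF : Equicontinuous F)
    (h : ∀ x, Tendsto (F · x) l (nhds (f x))) {s : Set X} (hs : IsCompact s) :
    TendstoUniformlyOn F f l s := by
  have key := (EquicontinuousOn.tendsto_uniformOnFun_iff_pi' (𝔖 := {s}) (by simpa using hs)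
    (by simpa using hF.equicontinuousOn s) l f).2 ?_
  · exact UniformOnFun.tendsto_iff_tendstoUniformlyOn.1 key s rfl
  · exact tendsto_pi_nhds.2 fun x => h x

theorem tendsto_comp_of_isCompactOperator {ι 𝕜 E F G : Type*} [NontriviallyNormedField 𝕜]
    [NormedAlgebra ℝ 𝕜] [SeminormedAddCommGroup E] [NormedSpace 𝕜 E] [SeminormedAddCommGroup F]
    [NormedSpace 𝕜 F] [SeminormedAddCommGroup G] [NormedSpace 𝕜 G] {l : Filter ι}
    {K : E →L[𝕜] F} (hK : IsCompactOperator K) {P : ι → F →L[𝕜] G} {Q : F →L[𝕜] G}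
    (hP : Equicontinuous fun i => ⇑(P i)) (hPQ : ∀ y, Tendsto (fun i => P i y) l (nhds (Q y))) :
    Tendsto (fun i => (P i).comp K) l (nhds (Q.comp K)) := by
  obtain ⟨C, hC, hKC⟩ := hK.image_closedBall_subset_compact (𝕜₁ := 𝕜) 1
  have hunif := Metric.tendstoUniformlyOn_iff.1 (hP.tendstoUniformlyOn_of_tendsto hPQ hC)
  refine Metric.tendsto_nhds.2 fun ε hε => ?_
  filter_upwards [hunif (ε / 2) (half_pos hε)] with i hi
  rw [dist_eq_norm]
  refine (ContinuousLinearMap.opNorm_le_of_unit_norm (half_pos hε).le fun x hx => ?_).trans_lt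
    (half_lt_self hε)
  have hx' : K x ∈ C := hKC ⟨x, by simp [hx], rfl⟩
  have hdist := (hi (K x) hx').le
  rw [dist_comm, dist_eq_norm] at hdist
  exact hdist

theorem ringInverse_apply_mem_of_mapsTo {𝕜 E : Type*} [NontriviallyNormedField 𝕜]
    [NormedAddCommGroup E] [NormedSpace 𝕜 E] {V : Submodule 𝕜 E} [FiniteDimensional 𝕜 V]
    {A : E →L[𝕜] E} (hA : IsUnit A) (hV : Set.MapsTo A V V) :
    Set.MapsTo (Ring.inverse A : E →L[𝕜] E) V V := by
  have hinv : ∀ x, Ring.inverse A (A x) = x := fun x => by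
    simpa using congr($(Ring.inverse_mul_cancel A hA) x)
  have hmap : V.map (A : E →ₗ[𝕜] E) = V :=
    Submodule.eq_of_le_of_finrank_eq (Submodule.map_le_iff_le_comap.2 hV)
      (V.equivMapOfInjective _ (Function.LeftInverse.injective hinv)).finrank_eq.symm
  intro v hv
  obtain ⟨w, hw, rfl⟩ := hmap.symm ▸ hv
  simpa [hinv] using hw

theorem eventually_lt_norm_of_tendsto_apply {ι 𝕜 E F : Type*} [DenselyNormedField 𝕜]
    [NormedAddCommGroup E] [NormedSpace 𝕜 E] [SeminormedAddCommGroup F] [NormedSpace 𝕜 F]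
    {l : Filter ι} {B : ι → E →L[𝕜] F} {A : E →L[𝕜] F}
    (hB : ∀ x, Tendsto (fun i => B i x) l (nhds (A x))) {c : ℝ} (hc : c < ‖A‖) :
    ∀ᶠ i in l, c < ‖B i‖ := by
  obtain ⟨x, hx, hcx⟩ := A.exists_lt_apply_of_lt_opNorm hc
  filter_upwards [(hB x).norm.eventually (lt_mem_nhds hcx)] with i hi
  exact hi.trans_le ((B i).unit_le_opNorm x hx.le)

theorem tendsto_of_norm_le_of_le_norm {ι 𝕜 E F : Type*} [DenselyNormedField 𝕜]
    [NormedAddCommGroup E] [NormedSpace 𝕜 E] [SeminormedAddCommGroup F] [NormedSpace 𝕜 F]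
    {l : Filter ι} {s : ι → ℝ} {B C : ι → E →L[𝕜] F} {A : E →L[𝕜] F}
    (hB : ∀ x, Tendsto (fun i => B i x) l (nhds (A x))) (hC : Tendsto C l (nhds A))
    (hBs : ∀ᶠ i in l, ‖B i‖ ≤ s i) (hsC : ∀ᶠ i in l, s i ≤ ‖C i‖) :
    Tendsto s l (nhds ‖A‖) := by
  refine tendsto_order.2 ⟨fun c hc => ?_, fun c hc => ?_⟩
  · filter_upwards [eventually_lt_norm_of_tendsto_apply hB hc, hBs] with i hcB hBs
    exact hcB.trans_le hBs
  · filter_upwards [hC.norm.eventually (gt_mem_nhds hc), hsC] with i hCc hsC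
    exact hsC.trans_lt hCc

section Galerkin

variable {H : Type*} [NormedAddCommGroup H] [InnerProductSpace ℂ H] (V : Submodule ℂ H)
  [FiniteDimensional ℂ V]

theorem projCLM_eq_starProjection : projCLM V = V.starProjection := rfl

theorem coe_galerkinTruncSub_apply (T : H →L[ℂ] H) (v : V) :
    (galerkinTruncSub T V v : H) = projCLM V (T v) := rfl

theorem galerkinTruncSub_projCLM_mul (T : H →L[ℂ] H) :
    galerkinTruncSub (projCLM V * T) V = galerkinTruncSub T V := by
  ext v
  simp [coe_galerkinTruncSub_apply, projCLM_eq_starProjection,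
    Submodule.starProjection_eq_self_iff.2 (V.starProjection_apply_mem _)]

theorem galerkinTruncSub_one : galerkinTruncSub 1 V = 1 := by
  ext v
  simp [coe_galerkinTruncSub_apply, projCLM_eq_starProjection]

variable {V} in
theorem galerkinTruncSub_mul {A B : H →L[ℂ] H} (hB : Set.MapsTo B V V) :
    galerkinTruncSub (A * B) V = galerkinTruncSub A V * galerkinTruncSub B V := by
  ext v
  simp [coe_galerkinTruncSub_apply, projCLM_eq_starProjection,
    Submodule.starProjection_eq_self_iff.2 (hB v.2)]

theorem norm_galerkinTruncSub_le (A : H →L[ℂ] H) : ‖galerkinTruncSub A V‖ ≤ ‖A‖ :=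
  ContinuousLinearMap.opNorm_le_bound _ (norm_nonneg _) fun v =>
    (V.norm_starProjection_apply_le _).trans (A.le_opNorm v)

variable {V} in
theorem norm_mul_projCLM_le {A : H →L[ℂ] H} (hA : Set.MapsTo A V V) :
    ‖A * projCLM V‖ ≤ ‖galerkinTruncSub A V‖ := by
  refine ContinuousLinearMap.opNorm_le_bound _ (galerkinTruncSub A V).opNorm_nonneg fun x => ?_
  set v := V.orthogonalProjectionOnto x
  calc ‖A (projCLM V x)‖ = ‖galerkinTruncSub A V v‖ := by
        rw [Submodule.coe_norm, coe_galerkinTruncSub_apply, projCLM_eq_starProjection,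
          Submodule.starProjection_eq_self_iff.2 (hA v.2)]
        rfl
    _ ≤ ‖galerkinTruncSub A V‖ * ‖v‖ := (galerkinTruncSub A V).le_opNorm v
    _ ≤ ‖galerkinTruncSub A V‖ * ‖x‖ := by
        gcongr
        exact V.norm_orthogonalProjectionOnto_apply_le x

theorem mapsTo_smul_one_add_projCLM_mul (a : ℂ) (K : H →L[ℂ] H) :
    Set.MapsTo (a • 1 + projCLM V * K : H →L[ℂ] H) V V := fun _ hv =>
  V.add_mem (V.smul_mem a hv) (V.starProjection_apply_mem _)

theorem projCLM_mul_smul_one_add_projCLM_mul (a : ℂ) (K : H →L[ℂ] H) :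
    projCLM V * (a • 1 + projCLM V * K) = projCLM V * (a • 1 + K) := by
  rw [mul_add, mul_add, ← mul_assoc, projCLM_eq_starProjection,
    V.isIdempotentElem_starProjection.eq]

theorem galerkinTruncSub_smul_one_add_inverse (a : ℂ) (K : H →L[ℂ] H)
    (hA : IsUnit (a • 1 + projCLM V * K)) :
    galerkinTruncSub (a • 1 + K) V *
        galerkinTruncSub (Ring.inverse (a • 1 + projCLM V * K)) V = 1 ∧
      galerkinTruncSub (Ring.inverse (a • 1 + projCLM V * K)) V *
        galerkinTruncSub (a • 1 + K) V = 1 := by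
  have htrunc : galerkinTruncSub (a • 1 + K) V = galerkinTruncSub (a • 1 + projCLM V * K) V := by
    rw [← galerkinTruncSub_projCLM_mul, ← projCLM_mul_smul_one_add_projCLM_mul,
      galerkinTruncSub_projCLM_mul]
  have hmaps := mapsTo_smul_one_add_projCLM_mul V a K
  rw [htrunc, ← galerkinTruncSub_mul (ringInverse_apply_mem_of_mapsTo hA hmaps),
    ← galerkinTruncSub_mul hmaps, Ring.mul_inverse_cancel _ hA, Ring.inverse_mul_cancel _ hA,
    galerkinTruncSub_one]
  exact ⟨rfl, rfl⟩

end Galerkin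

theorem galerkin_truncation_inverse_norm_tendsto_general
    {H : Type*} [NormedAddCommGroup H] [InnerProductSpace ℂ H] [CompleteSpace H]
    (a : ℂ)
    (K : H →L[ℂ] H) (hK : IsCompactOperator ⇑K)
    (T : H →L[ℂ] H) (hT : T = a • (1 : H →L[ℂ] H) + K)
    -- `T` is invertible with bounded inverse `Tinv`
    (Tinv : H →L[ℂ] H) (hTinv₁ : T * Tinv = 1) (hTinv₂ : Tinv * T = 1)
    (V : ℕ → Submodule ℂ H) [∀ j, FiniteDimensional ℂ (V j)]
    -- `P_j x → x` for every `x ∈ H`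
    (hproj : ∀ x : H, Tendsto (fun j => projCLM (V j) x) atTop (nhds x)) :
    ∃ (J : ℕ) (S : ∀ j : ℕ, (V j →L[ℂ] V j)),
      (∀ j : ℕ, J ≤ j →
        galerkinTruncSub T (V j) * S j = 1 ∧ S j * galerkinTruncSub T (V j) = 1) ∧
      Tendsto (fun j => ‖S j‖) atTop (nhds ‖Tinv‖) := by
  set A : ℕ → H →L[ℂ] H := fun j => a • 1 + projCLM (V j) * K
  have hequi : Equicontinuous fun j => ⇑(projCLM (V j)) :=
    (LipschitzWith.uniformEquicontinuous _ 1 fun j =>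
      (V j).lipschitzWith_starProjection).equicontinuous
  have hAT : Tendsto A atTop (nhds T) := by
    rw [hT]
    exact tendsto_const_nhds.add (tendsto_comp_of_isCompactOperator hK hequi hproj (Q := 1))
  let u : (H →L[ℂ] H)ˣ := ⟨T, Tinv, hTinv₁, hTinv₂⟩
  have hunit : ∀ᶠ j in atTop, IsUnit (A j) := hAT.eventually (Units.isOpen.mem_nhds u.isUnit)
  have hinv : Tendsto (fun j => Ring.inverse (A j)) atTop (nhds Tinv) := by
    rw [← show Ring.inverse T = Tinv from Ring.inverse_unit u]
    exact (NormedRing.inverse_continuousAt u).tendsto.comp hAT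
  obtain ⟨J, hJ⟩ := eventually_atTop.1 hunit
  refine ⟨J, fun j => galerkinTruncSub (Ring.inverse (A j)) (V j),
    fun j hj => hT ▸ galerkinTruncSub_smul_one_add_inverse (V j) a K (hJ j hj), ?_⟩
  refine tendsto_of_norm_le_of_le_norm (B := fun j => Ring.inverse (A j) * projCLM (V j))
    (fun x => ?_) hinv ?_ (.of_forall fun j => norm_galerkinTruncSub_le (V j) _)
  · exact ((continuous_fst.clm_apply continuous_snd).tendsto (Tinv, x)).comp
      (hinv.prodMk_nhds (hproj x))
  · filter_upwards [hunit] with j hj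
    exact norm_mul_projCLM_le
      (ringInverse_apply_mem_of_mapsTo hj (mapsTo_smul_one_add_projCLM_mul (V j) a K))

theorem galerkin_truncation_inverse_norm_tendsto
    {H : Type*} [NormedAddCommGroup H] [InnerProductSpace ℂ H] [CompleteSpace H]
    (a : ℂ) (ha : a ≠ 0)
    (K : H →L[ℂ] H) (hK : IsCompactOperator ⇑K)
    (T : H →L[ℂ] H) (hT : T = a • (1 : H →L[ℂ] H) + K)
    -- `T` is invertible with bounded inverse `Tinv`
    (Tinv : H →L[ℂ] H) (hTinv₁ : T * Tinv = 1) (hTinv₂ : Tinv * T = 1)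
    (V : ℕ → Submodule ℂ H) [∀ j, FiniteDimensional ℂ (V j)]
    -- `P_j x → x` for every `x ∈ H`
    (hproj : ∀ x : H, Tendsto (fun j => projCLM (V j) x) atTop (nhds x)) :
    ∃ (J : ℕ) (S : ∀ j : ℕ, (V j →L[ℂ] V j)),
      (∀ j : ℕ, J ≤ j →
        galerkinTruncSub T (V j) * S j = 1 ∧ S j * galerkinTruncSub T (V j) = 1) ∧
      Tendsto (fun j => ‖S j‖) atTop (nhds ‖Tinv‖) :=
  galerkin_truncation_inverse_norm_tendsto_general a K hK T hT Tinv hTinv₁ hTinv₂ V hproj
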